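/- arXiv:2001.11568 — 4 statements merged into one kernel-verified Lean document; each statement's English description precedes it below -/
import Mathlib

section
/- Let g : ℝ^d → ℝ be L-Lipschitz and δ > 0. Define the smoothed function ĝ(y) = E_{v ~ μ_B}[g(y + v/δ)], where μ_B is the uniform probability measure on the closed unit ball of ℝ^d. Then ĝ is differentiable on ℝ^d and its gradient ∇ĝ is (δ d L)-Lipschitz, i.e. ‖∇ĝ(y₁) − ∇ĝ(y₂)‖ ≤ δ d L ‖y₁ − y₂‖ for all y₁, y₂ ∈ ℝ^d; that is, ĝ is (δ d L)-smooth. -/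
/-!
Differentiating under the integral sign (Rademacher's theorem makes `fderiv g` an a.e. derivative,
bounded by `L`) shows that `∇ĝ(y)` is the average of `∇g` over the ball `B(y, r)`, `r = 1/δ`.
Two such averages at centres `h` apart differ by at most `L` times the relative volume of the
symmetric difference of the balls. That set lies in the annulus around the midpoint with radii
`r ± h/2`, of relative volume `((r + h/2)^d - (r - h/2)^d) / r^d = d h / r + o(h)`. Subdividing
the segment `[y₁, y₂]` into `n` pieces and letting `n → ∞` turns this first-order bound into the
Lipschitz constant `d L / r = δ d L`.
-/

open Set Metric MeasureTheory
open scoped RealInnerProductSpace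

/-- The uniform probability measure on the closed unit ball of `ℝ^d`. -/
noncomputable def uniformBallMeasure (d : ℕ) : Measure (EuclideanSpace ℝ (Fin d)) :=
  (volume (Metric.closedBall (0 : EuclideanSpace ℝ (Fin d)) 1))⁻¹ •
    (volume.restrict (Metric.closedBall (0 : EuclideanSpace ℝ (Fin d)) 1))

open Filter Topology Module ProbabilityTheory

section Subdivision

variable {E X : Type*} [NormedAddCommGroup E] [NormedSpace ℝ E] [PseudoMetricSpace X]

theorem dist_le_mul_of_forall_dist_eq_div {f : E → X} {x y : E} {n : ℕ} (hn : n ≠ 0) {c : ℝ}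
    (hf : ∀ a b, dist a b = dist x y / n → dist (f a) (f b) ≤ c) :
    dist (f x) (f y) ≤ n * c := by
  let z : ℕ → E := fun i => AffineMap.lineMap x y ((i : ℝ) / n)
  have hz0 : z 0 = x := by simp [z]
  have hzn : z n = y := by simp [z, hn]
  have hstep : ∀ i, dist (z i) (z (i + 1)) = dist x y / n := fun i => by
    have hn' : (0 : ℝ) < n := Nat.cast_pos.2 (Nat.pos_of_ne_zero hn)
    rw [dist_lineMap_lineMap, Real.dist_eq, abs_sub_comm, Nat.cast_succ, add_div,
      add_sub_cancel_left, abs_of_pos (one_div_pos.2 hn'), one_div_mul_eq_div]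
  calc dist (f x) (f y) = dist (f (z 0)) (f (z n)) := by rw [hz0, hzn]
    _ ≤ ∑ i ∈ Finset.range n, dist (f (z i)) (f (z (i + 1))) :=
      dist_le_range_sum_dist (fun i => f (z i)) n
    _ ≤ ∑ _i ∈ Finset.range n, c := Finset.sum_le_sum fun i _ => hf _ _ (hstep i)
    _ = n * c := by simp

theorem dist_le_mul_of_tendsto_modulus {f : E → X} {ω : ℝ → ℝ} {K ρ : ℝ} (hρ : 0 < ρ)
    (hf : ∀ a b, dist a b ≤ ρ → dist (f a) (f b) ≤ ω (dist a b))
    (hω : Tendsto (fun h => ω h / h) (𝓝[>] 0) (𝓝 K)) (x y : E) :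
    dist (f x) (f y) ≤ K * dist x y := by
  rcases eq_or_ne x y with rfl | hxy
  · simp
  set s := dist x y
  have hs : 0 < s := dist_pos.2 hxy
  have hsteps : Tendsto (fun n : ℕ => s / n) atTop (𝓝[>] 0) :=
    tendsto_nhdsWithin_iff.2 ⟨tendsto_const_div_atTop_nhds_zero_nat s,
      eventually_gt_atTop 0 |>.mono fun n hn => div_pos hs (Nat.cast_pos.2 hn)⟩
  have hlim : Tendsto (fun n : ℕ => s * (ω (s / n) / (s / n))) atTop (𝓝 (s * K)) :=
    (hω.comp hsteps).const_mul s
  rw [mul_comm]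
  refine ge_of_tendsto hlim ?_
  filter_upwards [eventually_gt_atTop 0, hsteps.eventually (Ioc_mem_nhdsGT hρ)] with n hn hsn
  calc dist (f x) (f y) ≤ n * ω (s / n) :=
        dist_le_mul_of_forall_dist_eq_div hn.ne' fun a b hab => hab ▸ hf a b (hab ▸ hsn.2)
    _ = s * (ω (s / n) / (s / n)) := by field_simp

end Subdivision

theorem tendsto_pow_add_sub_pow_sub_div (r : ℝ) (n : ℕ) :
    Tendsto (fun h => ((r + h / 2) ^ n - (r - h / 2) ^ n) / h) (𝓝[>] 0)
      (𝓝 (n * r ^ (n - 1))) := by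
  have hψ : HasDerivAt (fun h : ℝ => (r + h / 2) ^ n - (r - h / 2) ^ n) (n * r ^ (n - 1)) 0 := by
    have h := (((hasDerivAt_id' (0 : ℝ)).div_const 2).const_add r).fun_pow n |>.fun_sub
      ((((hasDerivAt_id' (0 : ℝ)).div_const 2).const_sub r).fun_pow n)
    refine h.congr_deriv ?_
    simp only [zero_div, add_zero, sub_zero]
    ring
  simpa only [zero_add, mul_zero, add_zero, sub_zero, sub_self, smul_eq_mul, div_eq_inv_mul] using hψ.tendsto_slope_zero_right

theorem closedBall_sdiff_closedBall_subset_closedBall_sdiff_ball {E : Type*}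
    [SeminormedAddCommGroup E] [NormedSpace ℝ E] (x y : E) (r : ℝ) :
    closedBall x r \ closedBall y r ⊆
      closedBall (midpoint ℝ x y) (r + dist x y / 2) \ ball (midpoint ℝ x y) (r - dist x y / 2) := by
  have hx : dist x (midpoint ℝ x y) = dist x y / 2 := by
    rw [dist_left_midpoint, Real.norm_two, inv_mul_eq_div]
  have hy : dist y (midpoint ℝ x y) = dist x y / 2 := by
    rw [dist_right_midpoint, Real.norm_two, inv_mul_eq_div, dist_comm]
  rintro u ⟨hux, huy⟩
  rw [mem_closedBall] at hux huy
  refine ⟨mem_closedBall.2 ?_, fun hu => huy ?_⟩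
  · linarith [dist_triangle u x (midpoint ℝ x y)]
  · linarith [mem_ball.1 hu, dist_triangle_right u y (midpoint ℝ x y)]

section SetIntegral

variable {G : Type*} [NormedAddCommGroup G] [NormedSpace ℝ G]

theorem norm_setIntegral_sub_setIntegral_le {α : Type*} [MeasurableSpace α] {ν : Measure α}
    {f : α → G} {C : ℝ} (hfm : AEStronglyMeasurable f ν) (hC : ∀ a, ‖f a‖ ≤ C)
    {s t : Set α} (hs : MeasurableSet s) (ht : MeasurableSet t) (hνs : ν s < ⊤) (hνt : ν t < ⊤) :
    ‖∫ a in s, f a ∂ν - ∫ a in t, f a ∂ν‖ ≤ C * (ν.real (s \ t) + ν.real (t \ s)) := by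
  have hint : ∀ u, ν u < ⊤ → IntegrableOn f u ν := fun u hu =>
    (integrableOn_const hu.ne).mono' hfm.restrict (Eventually.of_forall hC)
  have hsplit : ∫ a in s, f a ∂ν - ∫ a in t, f a ∂ν =
      ∫ a in s \ t, f a ∂ν - ∫ a in t \ s, f a ∂ν := by
    rw [← sdiff_self_inter, setIntegral_sdiff (hs.inter ht) (hint s hνs) inter_subset_left,
      ← sdiff_inter_self_eq_sdiff (s := t),
      setIntegral_sdiff (hs.inter ht) (hint t hνt) inter_subset_right]
    abel
  rw [hsplit, mul_add]
  exact (norm_sub_le _ _).trans <| add_le_add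
    (norm_setIntegral_le_of_norm_le_const ((measure_mono sdiff_subset).trans_lt hνs)
      fun a _ => hC a)
    (norm_setIntegral_le_of_norm_le_const ((measure_mono sdiff_subset).trans_lt hνt)
      fun a _ => hC a)

variable {E : Type*} [NormedAddCommGroup E] [NormedSpace ℝ E] [MeasurableSpace E] [BorelSpace E]
  [FiniteDimensional ℝ E] (μ : Measure E) [μ.IsAddHaarMeasure]

theorem MeasureTheory.Measure.addHaar_real_closedBall_sdiff_ball (x : E) {r R : ℝ} (hr : 0 < r)
    (hrR : r ≤ R) :
    μ.real (closedBall x R \ ball x r) =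
      (R ^ finrank ℝ E - r ^ finrank ℝ E) * μ.real (closedBall 0 1) := by
  rw [measureReal_sdiff (ball_subset_closedBall.trans (closedBall_subset_closedBall hrR))
      measurableSet_ball measure_closedBall_lt_top.ne,
    μ.addHaar_real_closedBall' x (hr.le.trans hrR), measureReal_def (s := ball x r),
    μ.addHaar_ball_of_pos x hr, ← μ.addHaar_unitClosedBall_eq_addHaar_unitBall,
    ENNReal.toReal_mul, ENNReal.toReal_ofReal (by positivity), ← measureReal_def]
  ring

theorem norm_setIntegral_closedBall_sub_setIntegral_closedBall_le {f : E → G} {C : ℝ}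
    (hfm : AEStronglyMeasurable f μ) (hC : ∀ x, ‖f x‖ ≤ C) {x y : E} {r : ℝ}
    (hxy : dist x y < 2 * r) :
    ‖∫ u in closedBall x r, f u ∂μ - ∫ u in closedBall y r, f u ∂μ‖ ≤
      C * (((r + dist x y / 2) ^ finrank ℝ E - (r - dist x y / 2) ^ finrank ℝ E) *
        μ.real (closedBall 0 1)) := by
  set m := midpoint ℝ x y
  set A := closedBall m (r + dist x y / 2) \ ball m (r - dist x y / 2)
  have hxyA : closedBall x r \ closedBall y r ⊆ A :=
    closedBall_sdiff_closedBall_subset_closedBall_sdiff_ball x y r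
  have hyxA : closedBall y r \ closedBall x r ⊆ A := by
    simpa only [A, m, midpoint_comm, dist_comm] using
      closedBall_sdiff_closedBall_subset_closedBall_sdiff_ball y x r
  have hA : μ A < ⊤ := (measure_mono sdiff_subset).trans_lt measure_closedBall_lt_top
  have hC0 : 0 ≤ C := (norm_nonneg _).trans (hC 0)
  have hxy0 : 0 ≤ dist x y := dist_nonneg
  calc _ ≤ C * (μ.real (closedBall x r \ closedBall y r) +
          μ.real (closedBall y r \ closedBall x r)) :=
        norm_setIntegral_sub_setIntegral_le hfm hC measurableSet_closedBall
          measurableSet_closedBall measure_closedBall_lt_top measure_closedBall_lt_top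
    _ ≤ C * μ.real A := by
        rw [← measureReal_union disjoint_sdiff_sdiff
          (measurableSet_closedBall.diff measurableSet_closedBall)
          (measure_ne_top_of_subset hxyA hA.ne) (measure_ne_top_of_subset hyxA hA.ne)]
        exact mul_le_mul_of_nonneg_left (measureReal_mono (union_subset hxyA hyxA) hA.ne) hC0
    _ = _ := by rw [μ.addHaar_real_closedBall_sdiff_ball m (by linarith) (by linarith)]

theorem setIntegral_unitClosedBall_comp_add_smul (f : E → G) (x : E) {r : ℝ} (hr : 0 < r) :
    ∫ v in closedBall 0 1, f (x + r • v) ∂μ =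
      (r ^ finrank ℝ E)⁻¹ • ∫ u in closedBall x r, f u ∂μ := by
  have htranslate : ∫ w in closedBall 0 r, f (x + w) ∂μ = ∫ u in closedBall x r, f u ∂μ := by
    simpa only [preimage_add_closedBall, sub_self] using
      (measurePreserving_add_left μ x).setIntegral_preimage_emb (measurableEmbedding_addLeft x) f
        (closedBall x r)
  rw [μ.setIntegral_comp_smul_of_pos (fun w => f (x + w)) _ hr, smul_unitClosedBall,
    Real.norm_of_nonneg hr.le, htranslate]

end SetIntegral

theorem LipschitzWith.hasFDerivAt_integral_comp_add_smul {E G : Type*} [NormedAddCommGroup E]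
    [NormedSpace ℝ E] [MeasurableSpace E] [BorelSpace E] [FiniteDimensional ℝ E]
    {μ : Measure E} [μ.IsAddHaarMeasure] [NormedAddCommGroup G] [NormedSpace ℝ G]
    [FiniteDimensional ℝ G] {g : E → G} {C : NNReal} (hg : LipschitzWith C g) {ν : Measure E}
    [IsFiniteMeasure ν] (hν : ν ≪ μ) {c : ℝ} (hc : c ≠ 0) {y : E}
    (hint : Integrable (fun v => g (y + c • v)) ν) :
    HasFDerivAt (fun y' => ∫ v, g (y' + c • v) ∂ν) (∫ v, fderiv ℝ g (y + c • v) ∂ν) y := by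
  have hshift : ∀ v, LipschitzWith C fun x => g (x + c • v) := fun v => by
    have h := hg.comp (isometry_add_right (c • v)).lipschitz
    rwa [mul_one] at h
  have hdiff : ∀ᵐ v ∂ν, DifferentiableAt ℝ g (y + c • v) :=
    hν.ae_le (((quasiMeasurePreserving_add_left μ y).comp
      (Measure.quasiMeasurePreserving_smul μ hc)).ae hg.ae_differentiableAt)
  refine (hasFDerivAt_integral_of_dominated_loc_of_lip (F := fun x v => g (x + c • v))
    (bound := fun _ => (C : ℝ)) univ_mem
    (Eventually.of_forall fun x => (hg.continuous.comp
      ((continuous_const_add x).comp (continuous_const_smul c))).aestronglyMeasurable) hint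
    ((measurable_fderiv ℝ g).comp (measurable_const_add y |>.comp (measurable_const_smul c))
      |>.aestronglyMeasurable)
    (Eventually.of_forall fun v => by
      simpa only [Real.nnabs_coe] using (hshift v).lipschitzOnWith)
    (integrable_const _) ?_).2
  filter_upwards [hdiff] with v hv
  have h := hv.hasFDerivAt.comp y ((hasFDerivAt_id y).add_const (c • v))
  rwa [ContinuousLinearMap.comp_id] at h

namespace uniformBallMeasure

variable {d : ℕ}

-- `uniformBallMeasure d` is definitionally `volume[|closedBall 0 1]`.
instance : IsProbabilityMeasure (uniformBallMeasure d) :=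
  cond_isProbabilityMeasure_of_finite (measure_closedBall_pos volume 0 one_pos).ne'
    measure_closedBall_lt_top.ne

theorem absolutelyContinuous : uniformBallMeasure d ≪ volume := cond_absolutelyContinuous

variable {G : Type*} [NormedAddCommGroup G]

theorem integrable_of_continuous {f : EuclideanSpace ℝ (Fin d) → G} (hf : Continuous f) :
    Integrable f (uniformBallMeasure d) :=
  (hf.continuousOn.integrableOn_compact (isCompact_closedBall 0 1)).smul_measure
    (ENNReal.inv_ne_top.2 (measure_closedBall_pos volume 0 one_pos).ne')

variable [NormedSpace ℝ G]

theorem integral_eq_smul_setIntegral (f : EuclideanSpace ℝ (Fin d) → G) :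
    ∫ v, f v ∂uniformBallMeasure d =
      (volume.real (closedBall (0 : EuclideanSpace ℝ (Fin d)) 1))⁻¹ •
        ∫ v in closedBall 0 1, f v := by
  rw [uniformBallMeasure, integral_smul_measure, ENNReal.toReal_inv, measureReal_def]

variable {f : EuclideanSpace ℝ (Fin d) → G} {C r : ℝ}

theorem dist_integral_comp_add_smul_le_of_lt (hfm : AEStronglyMeasurable f volume)
    (hC : ∀ x, ‖f x‖ ≤ C) (hr : 0 < r) {x y : EuclideanSpace ℝ (Fin d)}
    (hxy : dist x y < 2 * r) :
    dist (∫ v, f (x + r • v) ∂uniformBallMeasure d) (∫ v, f (y + r • v) ∂uniformBallMeasure d) ≤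
      C * ((r + dist x y / 2) ^ d - (r - dist x y / 2) ^ d) / r ^ d := by
  have hκ : 0 < volume.real (closedBall (0 : EuclideanSpace ℝ (Fin d)) 1) :=
    ENNReal.toReal_pos (measure_closedBall_pos volume 0 one_pos).ne' measure_closedBall_lt_top.ne
  have hballs := norm_setIntegral_closedBall_sub_setIntegral_closedBall_le volume hfm hC hxy
  rw [finrank_euclideanSpace_fin] at hballs
  rw [dist_eq_norm, integral_eq_smul_setIntegral, integral_eq_smul_setIntegral,
    setIntegral_unitClosedBall_comp_add_smul _ _ _ hr,
    setIntegral_unitClosedBall_comp_add_smul _ _ _ hr, finrank_euclideanSpace_fin, ← smul_sub,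
    ← smul_sub, norm_smul, norm_smul, Real.norm_of_nonneg (by positivity),
    Real.norm_of_nonneg (by positivity)]
  calc _ ≤ _ * (_ * (C * (((r + dist x y / 2) ^ d - (r - dist x y / 2) ^ d) *
          volume.real (closedBall (0 : EuclideanSpace ℝ (Fin d)) 1)))) := by gcongr
    _ = _ := by field_simp

theorem dist_integral_comp_add_smul_le (hfm : AEStronglyMeasurable f volume)
    (hC : ∀ x, ‖f x‖ ≤ C) (hr : 0 < r) (x y : EuclideanSpace ℝ (Fin d)) :
    dist (∫ v, f (x + r • v) ∂uniformBallMeasure d) (∫ v, f (y + r • v) ∂uniformBallMeasure d) ≤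
      C * d / r * dist x y := by
  have hK : C * (d * r ^ (d - 1)) / r ^ d = C * d / r := by
    rcases d with _ | d
    · simp
    · rw [Nat.add_sub_cancel, pow_succ]
      field_simp
  refine dist_le_mul_of_tendsto_modulus (f := fun x => ∫ v, f (x + r • v) ∂uniformBallMeasure d)
    (ω := fun h => C * ((r + h / 2) ^ d - (r - h / 2) ^ d) / r ^ d) hr
    (fun a b hab => dist_integral_comp_add_smul_le_of_lt hfm hC hr (by linarith)) ?_ x y
  rw [← hK]
  refine ((tendsto_pow_add_sub_pow_sub_div r d).const_mul C |>.div_const (r ^ d)).congr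
    fun h => ?_
  ring

end uniformBallMeasure

/-- If `g : ℝ^d → ℝ` is `L`-Lipschitz and `δ > 0`, then the ball-smoothed
function `ĝ(y) = E_{v ~ μ_B}[g(y + v/δ)]` is differentiable and `(δ d L)`-smooth, i.e. its
gradient is `(δ d L)`-Lipschitz. -/
theorem smoothing_lemma (d : ℕ) (L δ : ℝ) (hδ : 0 < δ)
    (g : EuclideanSpace ℝ (Fin d) → ℝ)
    (hg : ∀ a b : EuclideanSpace ℝ (Fin d), |g a - g b| ≤ L * ‖a - b‖) :
    (∀ y : EuclideanSpace ℝ (Fin d),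
        DifferentiableAt ℝ (fun y' => ∫ v, g (y' + δ⁻¹ • v) ∂(uniformBallMeasure d)) y) ∧
      (∀ y₁ y₂ : EuclideanSpace ℝ (Fin d),
        ‖gradient (fun y' => ∫ v, g (y' + δ⁻¹ • v) ∂(uniformBallMeasure d)) y₁ -
            gradient (fun y' => ∫ v, g (y' + δ⁻¹ • v) ∂(uniformBallMeasure d)) y₂‖ ≤
          δ * d * L * ‖y₁ - y₂‖) := by
  have hgL : LipschitzWith L.toNNReal g := LipschitzWith.of_dist_le' fun a b => by
    rw [Real.dist_eq, dist_eq_norm]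
    exact hg a b
  have hderiv : ∀ y, HasFDerivAt (fun y' => ∫ v, g (y' + δ⁻¹ • v) ∂(uniformBallMeasure d))
      (∫ v, fderiv ℝ g (y + δ⁻¹ • v) ∂(uniformBallMeasure d)) y := fun y =>
    hgL.hasFDerivAt_integral_comp_add_smul uniformBallMeasure.absolutelyContinuous
      (inv_ne_zero hδ.ne')
      (uniformBallMeasure.integrable_of_continuous (hgL.continuous.comp (by fun_prop)))
  refine ⟨fun y => (hderiv y).differentiableAt, fun y₁ y₂ => ?_⟩
  rcases eq_or_ne y₁ y₂ with rfl | hne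
  · simp
  -- `0 ≤ L` needs two distinct points: for `d = 0` the hypothesis `hg` holds for every `L`.
  have hL : (L.toNNReal : ℝ) = L := Real.coe_toNNReal L <| nonneg_of_mul_nonneg_left
    ((abs_nonneg _).trans (hg y₁ y₂)) (norm_pos_iff.2 (sub_ne_zero.2 hne))
  rw [gradient, gradient, ← map_sub, LinearIsometryEquiv.norm_map, (hderiv y₁).fderiv,
    (hderiv y₂).fderiv, ← dist_eq_norm, ← dist_eq_norm]
  calc _ ≤ L.toNNReal * d / δ⁻¹ * dist y₁ y₂ :=
        uniformBallMeasure.dist_integral_comp_add_smul_le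
          (measurable_fderiv ℝ g).aestronglyMeasurable
          (fun _ => norm_fderiv_le_of_lipschitz ℝ hgL) (inv_pos.2 hδ) y₁ y₂
    _ = δ * d * L * dist y₁ y₂ := by rw [hL]; field_simp
end

section
/- Let K ⊆ ℝ^d be a nonempty convex compact set with ‖x‖ ≤ D for all x ∈ K, let δ > 0, and let h_δ^*(y) = E_{v ~ μ_B}[M_K(y + v/δ)] be the ball-smoothed support function. Then for every x ∈ K, the Fenchel conjugate value satisfies sup_{y ∈ ℝ^d} (⟨x, y⟩ − h_δ^*(y)) ≤ D/δ. -/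
open Set Metric MeasureTheory
open scoped RealInnerProductSpace

/-- The support function `M_K(y) = sup_{x ∈ K} ⟨y, x⟩` of a set `K ⊆ ℝ^d`. -/
noncomputable def supportFn {d : ℕ} (K : Set (EuclideanSpace ℝ (Fin d)))
    (y : EuclideanSpace ℝ (Fin d)) : ℝ :=
  sSup ((fun x => ⟪y, x⟫) '' K)

/-- The ball-smoothed support function `h_δ^*(y) = E_{v ~ μ_B}[M_K(y + v/δ)]`. -/
noncomputable def smoothedSupportFn {d : ℕ} (K : Set (EuclideanSpace ℝ (Fin d))) (δ : ℝ)
    (y : EuclideanSpace ℝ (Fin d)) : ℝ :=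
  ∫ v, supportFn K (y + δ⁻¹ • v) ∂(uniformBallMeasure d)

/-!
For `x ∈ K` and `‖v‖ ≤ 1`, the support function at `y + δ⁻¹ • v` is at least
`⟪y + δ⁻¹ • v, x⟫ ≥ ⟪x, y⟫ - D / δ`. Averaging this pointwise bound over the uniform
probability measure on the unit ball bounds `h_δ^*(y)` below by `⟪x, y⟫ - D / δ`; the
average makes sense because a support function of a set in the `D`-ball is `D`-Lipschitz.
-/

section SupportFn

variable {d : ℕ} {K : Set (EuclideanSpace ℝ (Fin d))} {D : ℝ}

lemma bddAbove_inner_image_of_norm_le (hD : ∀ x ∈ K, ‖x‖ ≤ D)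
    (z : EuclideanSpace ℝ (Fin d)) : BddAbove ((fun x => ⟪z, x⟫) '' K) := by
  refine ⟨‖z‖ * D, ?_⟩
  rintro _ ⟨x, hx, rfl⟩
  exact (real_inner_le_norm z x).trans (mul_le_mul_of_nonneg_left (hD x hx) (norm_nonneg z))

lemma inner_le_supportFn (hD : ∀ x ∈ K, ‖x‖ ≤ D) {x : EuclideanSpace ℝ (Fin d)} (hx : x ∈ K)
    (z : EuclideanSpace ℝ (Fin d)) : ⟪z, x⟫ ≤ supportFn K z :=
  le_csSup (bddAbove_inner_image_of_norm_le hD z) ⟨x, hx, rfl⟩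

lemma supportFn_le_add_mul_norm_sub (hD : ∀ x ∈ K, ‖x‖ ≤ D) (hK : K.Nonempty)
    (a b : EuclideanSpace ℝ (Fin d)) : supportFn K a ≤ supportFn K b + D * ‖a - b‖ := by
  refine csSup_le (hK.image _) ?_
  rintro _ ⟨w, hw, rfl⟩
  calc ⟪a, w⟫ = ⟪b, w⟫ + ⟪a - b, w⟫ := by rw [inner_sub_left]; ring
    _ ≤ supportFn K b + ‖a - b‖ * ‖w‖ :=
      add_le_add (inner_le_supportFn hD hw b) (real_inner_le_norm _ _)
    _ ≤ supportFn K b + D * ‖a - b‖ := by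
      rw [mul_comm D]
      gcongr
      exact hD w hw

lemma lipschitzWith_supportFn (hD : ∀ x ∈ K, ‖x‖ ≤ D) (hK : K.Nonempty) :
    LipschitzWith (Real.toNNReal D) (supportFn K) :=
  LipschitzWith.of_le_add_mul' D fun a b => by
    simpa only [dist_eq_norm] using supportFn_le_add_mul_norm_sub hD hK a b

lemma inner_sub_div_le_supportFn_add_smul (hD : ∀ x ∈ K, ‖x‖ ≤ D)
    {x : EuclideanSpace ℝ (Fin d)} (hx : x ∈ K) (y : EuclideanSpace ℝ (Fin d))
    {v : EuclideanSpace ℝ (Fin d)} (hv : ‖v‖ ≤ 1) {δ : ℝ} (hδ : 0 ≤ δ) :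
    ⟪x, y⟫ - D / δ ≤ supportFn K (y + δ⁻¹ • v) := by
  have hvx : -D ≤ ⟪v, x⟫ := by
    refine neg_le_of_abs_le ((abs_real_inner_le_norm v x).trans ?_)
    simpa using mul_le_mul hv (hD x hx) (norm_nonneg x) zero_le_one
  calc ⟪x, y⟫ - D / δ = ⟪y, x⟫ + δ⁻¹ * -D := by rw [real_inner_comm]; ring
    _ ≤ ⟪y, x⟫ + δ⁻¹ * ⟪v, x⟫ := by gcongr
    _ = ⟪y + δ⁻¹ • v, x⟫ := by rw [inner_add_left, real_inner_smul_left]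
    _ ≤ supportFn K (y + δ⁻¹ • v) := inner_le_supportFn hD hx _

end SupportFn

section UniformBallMeasure

variable (d : ℕ)

instance isProbabilityMeasure_uniformBallMeasure :
    IsProbabilityMeasure (uniformBallMeasure d) := by
  constructor
  simp only [uniformBallMeasure, Measure.smul_apply, Measure.restrict_apply_univ, smul_eq_mul]
  exact ENNReal.inv_mul_cancel (measure_closedBall_pos _ _ one_pos).ne'
    (isCompact_closedBall _ _).measure_lt_top.ne

lemma ae_norm_le_one_uniformBallMeasure : ∀ᵐ v ∂uniformBallMeasure d, ‖v‖ ≤ 1 := by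
  have hmem : ∀ᵐ v ∂uniformBallMeasure d, v ∈ closedBall (0 : EuclideanSpace ℝ (Fin d)) 1 :=
    Measure.ae_smul_measure (ae_restrict_mem measurableSet_closedBall) _
  filter_upwards [hmem] with v hv
  simpa using hv

variable {d}

lemma Continuous.integrable_uniformBallMeasure {E : Type*} [NormedAddCommGroup E]
    {f : EuclideanSpace ℝ (Fin d) → E}
    (hf : Continuous f) : Integrable f (uniformBallMeasure d) :=
  (hf.continuousOn.integrableOn_compact (isCompact_closedBall _ _)).smul_measure
    (ENNReal.inv_ne_top.mpr (measure_closedBall_pos _ _ one_pos).ne')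

end UniformBallMeasure

theorem smoothed_support_fenchel_bound_general (d : ℕ) (K : Set (EuclideanSpace ℝ (Fin d)))
    (D δ : ℝ) (hD : ∀ x ∈ K, ‖x‖ ≤ D) (hδ : 0 < δ) :
    ∀ x ∈ K, ∀ y : EuclideanSpace ℝ (Fin d),
      ⟪x, y⟫ - smoothedSupportFn K δ y ≤ D / δ := by
  intro x hx y
  have hint : Integrable (fun v => supportFn K (y + δ⁻¹ • v)) (uniformBallMeasure d) :=
    ((lipschitzWith_supportFn hD ⟨x, hx⟩).continuous.comp
      (by fun_prop)).integrable_uniformBallMeasure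
  have hlower :
      ∀ᵐ v ∂uniformBallMeasure d, ⟪x, y⟫ - D / δ ≤ supportFn K (y + δ⁻¹ • v) := by
    filter_upwards [ae_norm_le_one_uniformBallMeasure d] with v hv
    exact inner_sub_div_le_supportFn_add_smul hD hx y hv hδ.le
  have hmean : ⟪x, y⟫ - D / δ ≤ smoothedSupportFn K δ y := by
    simpa only [smoothedSupportFn, integral_const, probReal_univ, one_smul] using
      integral_mono_ae (integrable_const _) hint hlower
  linarith

/-- For a nonempty convex compact `K ⊆ ℝ^d` with `‖x‖ ≤ D` on `K` and `δ > 0`,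
the Fenchel conjugate of the ball-smoothed support function satisfies, for every `x ∈ K`,
`sup_{y} (⟨x, y⟩ − h_δ^*(y)) ≤ D/δ`, i.e. `⟨x, y⟩ − h_δ^*(y) ≤ D/δ` for every `y ∈ ℝ^d`. -/
theorem smoothed_support_fenchel_bound (d : ℕ) (K : Set (EuclideanSpace ℝ (Fin d)))
    (hKne : K.Nonempty) (hKconv : Convex ℝ K) (hKcomp : IsCompact K)
    (D δ : ℝ) (hD : ∀ x ∈ K, ‖x‖ ≤ D) (hδ : 0 < δ) :
    ∀ x ∈ K, ∀ y : EuclideanSpace ℝ (Fin d),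
      ⟪x, y⟫ - smoothedSupportFn K δ y ≤ D / δ :=
  smoothed_support_fenchel_bound_general d K D δ hD hδ
end

section
/- Let Z₁, …, Z_m be i.i.d. random vectors in ℝ^d with ‖Z_j‖ ≤ D almost surely and mean x̂ = E[Z₁], and let X̄ = (1/m) Σ_{j=1}^m Z_j. Let f : ℝ^d → ℝ be differentiable with ‖∇f(x)‖ ≤ G for all x in the closed ball of radius D. Then E[⟨∇f(X̄), x̂ − X̄⟩] ≤ 2GD/√m. -/
/-! Since the average `X̄` of the `Z j` stays in the ball of radius `D`, Cauchy–Schwarz and the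
gradient bound reduce the claim to `E ‖x̂ - X̄‖ ≤ 2 D / √m`. The deviations `x̂ - Z j` are centred,
independent and bounded by `2 D`, so the cross terms of `E ‖∑ j, (x̂ - Z j)‖²` vanish and it is at
most `m (2 D)²`; then `(E Y)² ≤ E Y²` gives the bound. -/

open MeasureTheory ProbabilityTheory Metric
open scoped RealInnerProductSpace

section Deterministic

variable {E : Type*} [NormedAddCommGroup E]

theorem norm_inv_card_smul_sum_le [NormedSpace ℝ E] {ι : Type*} [Fintype ι] {a : ι → E} {D : ℝ}
    (hD : 0 ≤ D) (ha : ∀ i, ‖a i‖ ≤ D) :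
    ‖(Fintype.card ι : ℝ)⁻¹ • ∑ i, a i‖ ≤ D := by
  rcases (Fintype.card ι).eq_zero_or_pos with hι | hι
  · simpa [hι] using hD
  have hn : (0 : ℝ) < Fintype.card ι := Nat.cast_pos.mpr hι
  calc ‖(Fintype.card ι : ℝ)⁻¹ • ∑ i, a i‖
      ≤ (Fintype.card ι : ℝ)⁻¹ * ∑ _i : ι, D := by
        rw [norm_smul, Real.norm_of_nonneg (inv_nonneg.mpr hn.le)]
        gcongr
        exact (norm_sum_le _ _).trans (Finset.sum_le_sum fun i _ => ha i)
    _ = D := by simp [Finset.sum_const, field]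

theorem measurable_gradient [InnerProductSpace ℝ E] [CompleteSpace E] [MeasurableSpace E]
    [BorelSpace E] (f : E → ℝ) : Measurable (gradient f) :=
  (InnerProductSpace.toDual ℝ E).symm.continuous.measurable.comp (measurable_fderiv ℝ f)

end Deterministic

section Probability

variable {Ω : Type*} [MeasurableSpace Ω] {μ : Measure Ω}
  {E : Type*} [NormedAddCommGroup E] [InnerProductSpace ℝ E]

theorem integral_inner_le_mul_integral_norm {g v : Ω → E} {G : ℝ}
    (hg : AEStronglyMeasurable g μ) (hv : Integrable v μ) (hG : ∀ᵐ ω ∂μ, ‖g ω‖ ≤ G) :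
    ∫ ω, ⟪g ω, v ω⟫ ∂μ ≤ G * ∫ ω, ‖v ω‖ ∂μ := by
  have hpointwise : ∀ᵐ ω ∂μ, ⟪g ω, v ω⟫ ≤ G * ‖v ω‖ := by
    filter_upwards [hG] with ω hω
    exact (real_inner_le_norm _ _).trans (by gcongr)
  have hint : Integrable (fun ω => ⟪g ω, v ω⟫) μ := by
    refine (hv.norm.const_mul G).mono' (hg.inner hv.1) ?_
    filter_upwards [hG] with ω hω
    exact (norm_inner_le_norm _ _).trans (by gcongr)
  rw [← integral_const_mul]
  exact integral_mono_ae hint (hv.norm.const_mul G) hpointwise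

theorem sq_integral_le_integral_sq [IsProbabilityMeasure μ] {Y : Ω → ℝ} (hY : MemLp Y 2 μ) :
    (∫ ω, Y ω ∂μ) ^ 2 ≤ ∫ ω, Y ω ^ 2 ∂μ := by
  have h := variance_nonneg Y μ
  rw [variance_eq_sub hY] at h
  simpa using h

end Probability

section Independent

variable {Ω : Type*} [MeasurableSpace Ω] {μ : Measure Ω}
  {E : Type*} [NormedAddCommGroup E] [InnerProductSpace ℝ E] [CompleteSpace E]
  [MeasurableSpace E] [BorelSpace E] {ι : Type*} [Fintype ι] {W : ι → Ω → E}

theorem integral_norm_sum_sq_eq_sum_of_indepFun [IsFiniteMeasure μ] (hW : ∀ i, MemLp (W i) 2 μ)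
    (hindep : Pairwise fun i j => IndepFun (W i) (W j) μ) (hmean : ∀ i, μ[W i] = 0) :
    ∫ ω, ‖∑ i, W i ω‖ ^ 2 ∂μ = ∑ i, ∫ ω, ‖W i ω‖ ^ 2 ∂μ := by
  have hint i : Integrable (W i) μ := (hW i).integrable one_le_two
  have hinner_int i j : Integrable (fun ω => ⟪W i ω, W j ω⟫) μ := by
    rcases eq_or_ne i j with rfl | hij
    · simpa [real_inner_self_eq_norm_sq] using (hW i).integrable_norm_pow' (p := 2)
    · exact (hindep hij).integrable_bilin (hint i) (hint j) (innerSL ℝ)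
  have hcross i j (hij : i ≠ j) : ∫ ω, ⟪W i ω, W j ω⟫ ∂μ = 0 := by
    have h := (hindep hij).integral_bilin (hint i) (hint j) (innerSL ℝ)
    rwa [hmean, map_zero, zero_apply] at h
  calc ∫ ω, ‖∑ i, W i ω‖ ^ 2 ∂μ = ∫ ω, ∑ i, ∑ j, ⟪W i ω, W j ω⟫ ∂μ := by
        simp_rw [← real_inner_self_eq_norm_sq, sum_inner, inner_sum]
    _ = ∑ i, ∑ j, ∫ ω, ⟪W i ω, W j ω⟫ ∂μ := by
        rw [integral_finsetSum _ fun i _ => integrable_finsetSum _ fun j _ => hinner_int i j]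
        exact Finset.sum_congr rfl fun i _ => integral_finsetSum _ fun j _ => hinner_int i j
    _ = ∑ i, ∫ ω, ⟪W i ω, W i ω⟫ ∂μ := Finset.sum_congr rfl fun i _ =>
        Finset.sum_eq_single i (fun j _ hji => hcross i j hji.symm) (by simp)
    _ = ∑ i, ∫ ω, ‖W i ω‖ ^ 2 ∂μ := by simp_rw [real_inner_self_eq_norm_sq]

theorem integral_norm_sum_le_of_indepFun [IsProbabilityMeasure μ] {C : ℝ} (hC : 0 ≤ C)
    (hW : ∀ i, AEStronglyMeasurable (W i) μ) (hbdd : ∀ i, ∀ᵐ ω ∂μ, ‖W i ω‖ ≤ C)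
    (hindep : Pairwise fun i j => IndepFun (W i) (W j) μ) (hmean : ∀ i, μ[W i] = 0) :
    ∫ ω, ‖∑ i, W i ω‖ ∂μ ≤ √(Fintype.card ι) * C := by
  have hW2 i : MemLp (W i) 2 μ := .of_bound (hW i) C (hbdd i)
  have hsq : (∫ ω, ‖∑ i, W i ω‖ ∂μ) ^ 2 ≤ Fintype.card ι * C ^ 2 := calc
    (∫ ω, ‖∑ i, W i ω‖ ∂μ) ^ 2 ≤ ∫ ω, ‖∑ i, W i ω‖ ^ 2 ∂μ :=
      sq_integral_le_integral_sq (memLp_finsetSum _ fun i _ => hW2 i).norm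
    _ = ∑ i, ∫ ω, ‖W i ω‖ ^ 2 ∂μ := integral_norm_sum_sq_eq_sum_of_indepFun hW2 hindep hmean
    _ ≤ ∑ _i : ι, C ^ 2 := Finset.sum_le_sum fun i _ => by
      have hbdd_sq : ∀ᵐ ω ∂μ, ‖W i ω‖ ^ 2 ≤ C ^ 2 := by
        filter_upwards [hbdd i] with ω hω
        gcongr
      simpa using integral_mono_ae (hW2 i).integrable_norm_pow' (integrable_const _) hbdd_sq
    _ = Fintype.card ι * C ^ 2 := by simp
  rw [← Real.sqrt_sq (integral_nonneg fun ω => norm_nonneg _), ← Real.sqrt_sq hC,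
    ← Real.sqrt_mul (Nat.cast_nonneg _)]
  exact Real.sqrt_le_sqrt hsq

theorem integral_norm_inv_card_smul_sum_le_of_indepFun [IsProbabilityMeasure μ] {C : ℝ}
    (hC : 0 ≤ C) (hW : ∀ i, AEStronglyMeasurable (W i) μ) (hbdd : ∀ i, ∀ᵐ ω ∂μ, ‖W i ω‖ ≤ C)
    (hindep : Pairwise fun i j => IndepFun (W i) (W j) μ) (hmean : ∀ i, μ[W i] = 0) :
    ∫ ω, ‖(Fintype.card ι : ℝ)⁻¹ • ∑ i, W i ω‖ ∂μ ≤ C / √(Fintype.card ι) := by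
  set n := (Fintype.card ι : ℝ)
  have hn : 0 ≤ n := Nat.cast_nonneg _
  calc ∫ ω, ‖n⁻¹ • ∑ i, W i ω‖ ∂μ = n⁻¹ * ∫ ω, ‖∑ i, W i ω‖ ∂μ := by
        simp_rw [norm_smul, Real.norm_of_nonneg (inv_nonneg.mpr hn)]
        exact integral_const_mul _ _
    _ ≤ n⁻¹ * (√n * C) := by
        gcongr
        exact integral_norm_sum_le_of_indepFun hC hW hbdd hindep hmean
    _ = C / √n := by rw [← mul_assoc, ← div_eq_inv_mul, Real.sqrt_div_self', one_div_mul_eq_div]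

theorem integral_norm_sub_inv_card_smul_sum_le_of_iIndepFun [IsProbabilityMeasure μ] [Nonempty ι]
    {Z : ι → Ω → E} {D : ℝ} {xhat : E} (hD : 0 ≤ D) (hZ : ∀ j, AEStronglyMeasurable (Z j) μ)
    (hindep : iIndepFun Z μ) (hbdd : ∀ j, ∀ᵐ ω ∂μ, ‖Z j ω‖ ≤ D) (hmean : ∀ j, μ[Z j] = xhat) :
    ∫ ω, ‖xhat - (Fintype.card ι : ℝ)⁻¹ • ∑ j, Z j ω‖ ∂μ ≤ 2 * D / √(Fintype.card ι) := by
  have hint j : Integrable (Z j) μ := .of_bound (hZ j) D (hbdd j)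
  have hxhat : ‖xhat‖ ≤ D := by
    simpa [hmean] using norm_integral_le_of_norm_le_const (μ := μ) (hbdd (Classical.arbitrary ι))
  have hdev ω : xhat - (Fintype.card ι : ℝ)⁻¹ • ∑ j, Z j ω
      = (Fintype.card ι : ℝ)⁻¹ • ∑ j, (xhat - Z j ω) := by
    rw [Finset.sum_sub_distrib, smul_sub, Finset.sum_const, Finset.card_univ,
      ← Nat.cast_smul_eq_nsmul ℝ, smul_smul, inv_mul_cancel₀ (by positivity), one_smul]
  simp_rw [hdev]
  refine integral_norm_inv_card_smul_sum_le_of_indepFun (by positivity)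
    (fun j => aestronglyMeasurable_const.sub (hZ j)) (fun j => ?_)
    (fun i j hij => (hindep.indepFun hij).comp (measurable_id.const_sub xhat)
      (measurable_id.const_sub xhat)) (fun j => ?_)
  · filter_upwards [hbdd j] with ω hω
    linarith [norm_sub_le xhat (Z j ω)]
  · rw [integral_sub (integrable_const _) (hint j), hmean j]
    simp

end Independent

theorem estimation_error_convex_general (d m : ℕ) (hm : 0 < m) (D G : ℝ)
    {Ω : Type*} [MeasurableSpace Ω] (μ : Measure Ω) [IsProbabilityMeasure μ]
    (Z : Fin m → Ω → EuclideanSpace ℝ (Fin d))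
    (hmeas : ∀ j, Measurable (Z j))
    (hindep : iIndepFun Z μ)
    (hbdd : ∀ j, ∀ᵐ ω ∂μ, ‖Z j ω‖ ≤ D)
    (xhat : EuclideanSpace ℝ (Fin d))
    (hmean : ∀ j, ∫ ω, Z j ω ∂μ = xhat)
    (f : EuclideanSpace ℝ (Fin d) → ℝ)
    (hG : ∀ x ∈ Metric.closedBall (0 : EuclideanSpace ℝ (Fin d)) D, ‖gradient f x‖ ≤ G) :
    ∫ ω, ⟪gradient f ((m : ℝ)⁻¹ • ∑ j, Z j ω), xhat - (m : ℝ)⁻¹ • ∑ j, Z j ω⟫ ∂μ ≤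
      2 * G * D / Real.sqrt m := by
  have : Nonempty (Fin m) := Fin.pos_iff_nonempty.mp hm
  have hD : 0 ≤ D := (hbdd ⟨0, hm⟩).exists.elim fun _ h => (norm_nonneg _).trans h
  have hG0 : 0 ≤ G := (norm_nonneg _).trans (hG 0 (mem_closedBall_self hD))
  have hgrad_bdd : ∀ᵐ ω ∂μ, ‖gradient f ((m : ℝ)⁻¹ • ∑ j, Z j ω)‖ ≤ G := by
    filter_upwards [ae_all_iff.2 hbdd] with ω hω
    exact hG _ (mem_closedBall_zero_iff.2 (by simpa using norm_inv_card_smul_sum_le hD hω))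
  have hdev_int : Integrable (fun ω => xhat - (m : ℝ)⁻¹ • ∑ j, Z j ω) μ :=
    (integrable_const xhat).sub ((integrable_finsetSum Finset.univ fun j _ =>
      Integrable.of_bound (hmeas j).aestronglyMeasurable D (hbdd j)).smul (m : ℝ)⁻¹)
  have hdev : ∫ ω, ‖xhat - (m : ℝ)⁻¹ • ∑ j, Z j ω‖ ∂μ ≤ 2 * D / √m := by
    simpa using integral_norm_sub_inv_card_smul_sum_le_of_iIndepFun hD
      (fun j => (hmeas j).aestronglyMeasurable) hindep hbdd hmean
  calc _ ≤ G * ∫ ω, ‖xhat - (m : ℝ)⁻¹ • ∑ j, Z j ω‖ ∂μ :=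
        integral_inner_le_mul_integral_norm
          ((measurable_gradient f).comp (by fun_prop)).aestronglyMeasurable hdev_int hgrad_bdd
    _ ≤ G * (2 * D / √m) := by gcongr
    _ = 2 * G * D / √m := by ring

/-- For i.i.d. random vectors `Z₁, …, Z_m` in `ℝ^d` bounded by `D` with mean
`x̂`, empirical average `X̄`, and `f` differentiable with `‖∇f‖ ≤ G` on the closed ball of
radius `D`, one has `E[⟨∇f(X̄), x̂ − X̄⟩] ≤ 2GD/√m`. -/
theorem estimation_error_convex (d m : ℕ) (hm : 0 < m) (D G : ℝ)
    {Ω : Type*} [MeasurableSpace Ω] (μ : Measure Ω) [IsProbabilityMeasure μ]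
    (Z : Fin m → Ω → EuclideanSpace ℝ (Fin d))
    (hmeas : ∀ j, Measurable (Z j))
    (hindep : iIndepFun Z μ)
    (hident : ∀ i j, IdentDistrib (Z i) (Z j) μ μ)
    (hbdd : ∀ j, ∀ᵐ ω ∂μ, ‖Z j ω‖ ≤ D)
    (xhat : EuclideanSpace ℝ (Fin d))
    (hmean : ∀ j, ∫ ω, Z j ω ∂μ = xhat)
    (f : EuclideanSpace ℝ (Fin d) → ℝ)
    (hdiff : ∀ x : EuclideanSpace ℝ (Fin d), DifferentiableAt ℝ f x)
    (hG : ∀ x ∈ Metric.closedBall (0 : EuclideanSpace ℝ (Fin d)) D, ‖gradient f x‖ ≤ G) :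
    ∫ ω, ⟪gradient f ((m : ℝ)⁻¹ • ∑ j, Z j ω), xhat - (m : ℝ)⁻¹ • ∑ j, Z j ω⟫ ∂μ ≤
      2 * G * D / Real.sqrt m :=
  estimation_error_convex_general d m hm D G μ Z hmeas hindep hbdd xhat hmean f hG
end

section
/- (Vector-valued Azuma inequality, Pinelis.) Let (F_k)_{k=0}^K be a filtration on a probability space and let ν₁, …, ν_K be ℝ^d-valued random vectors such that ν_k is F_k-measurable, E[ν_k | F_{k−1}] = 0 almost surely, and ‖ν_k‖ ≤ c_k almost surely for constants c_k > 0. Then for every λ > 0, P(‖Σ_{k=1}^K ν_k‖ > λ) ≤ 2 exp(− λ² / (2 Σ_{k=1}^K c_k²)). -/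
/-!
For `‖y‖ ≤ c`, the function `u ↦ cosh √u` is convex on `[0, ∞)`, and `‖x + y‖²` is an affine
function of `⟪x, y⟫ ∈ [-‖x‖c, ‖x‖c]`; comparing with the chord through the extreme cases
`‖x‖ ± c` gives `cosh ‖x + y‖ ≤ cosh ‖x‖ cosh c + w(‖x‖) ⟪x, y⟫`. For a martingale difference
`y = ν_k` and an `ℱ_k`-measurable `x = S_k`, the inner-product term has mean zero, so
`E cosh (t ‖S_{k+1}‖) ≤ cosh (t c_k) E cosh (t ‖S_k‖)`. Iterating and using `cosh a ≤ exp (a²/2)`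
gives `E cosh (t ‖S_K‖) ≤ exp (t² σ² / 2)`; Markov's inequality with `cosh (tλ) ≥ exp (tλ) / 2`
and `t = λ / σ²` finishes the proof.
-/

open MeasureTheory Real Finset

theorem Real.sinh_le_mul_cosh {x : ℝ} (hx : 0 ≤ x) : sinh x ≤ x * cosh x := by
  have hmono : MonotoneOn (fun y ↦ y * cosh y - sinh y) (Set.Ici 0) := by
    refine monotoneOn_of_deriv_nonneg (convex_Ici 0) (by fun_prop) (by fun_prop) fun y hy ↦ ?_
    rw [interior_Ici] at hy
    have hderiv : HasDerivAt (fun y ↦ y * cosh y - sinh y) (y * sinh y) y :=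
      (((hasDerivAt_id y).mul (hasDerivAt_cosh y)).sub (hasDerivAt_sinh y)).congr_deriv (by simp)
    rw [hderiv.deriv]
    exact mul_nonneg hy.le (sinh_nonneg_iff.2 hy.le)
  simpa using hmono Set.self_mem_Ici hx hx

theorem Real.monotoneOn_sinh_div_self : MonotoneOn (fun y ↦ sinh y / y) (Set.Ioi 0) := by
  refine monotoneOn_of_deriv_nonneg (convex_Ioi 0) ?_ ?_ fun y hy ↦ ?_
  · exact continuous_sinh.continuousOn.div continuousOn_id fun y hy ↦ ne_of_gt hy
  · exact fun y hy ↦ (differentiableAt_sinh.div differentiableAt_id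
      (ne_of_gt (interior_subset hy))).differentiableWithinAt
  rw [interior_Ioi] at hy
  have hderiv : HasDerivAt (fun y ↦ sinh y / y) ((cosh y * y - sinh y) / y ^ 2) y :=
    ((hasDerivAt_sinh y).div (hasDerivAt_id y) hy.ne').congr_deriv (by simp)
  rw [hderiv.deriv]
  exact div_nonneg (by linarith [sinh_le_mul_cosh hy.le]) (sq_nonneg _)

theorem Real.convexOn_cosh_sqrt : ConvexOn ℝ (Set.Ici 0) (fun u ↦ cosh √u) := by
  have hderiv {u : ℝ} (hu : 0 < u) : HasDerivAt (fun u ↦ cosh √u) (sinh √u / √u / 2) u :=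
    ((hasDerivAt_cosh √u).comp u (hasDerivAt_sqrt hu.ne')).congr_deriv (by ring)
  refine MonotoneOn.convexOn_of_deriv (convex_Ici 0) (by fun_prop) ?_ ?_
  · rw [interior_Ici]
    exact fun u hu ↦ (hderiv hu).differentiableAt.differentiableWithinAt
  · rw [interior_Ici]
    intro u hu v hv huv
    rw [(hderiv hu).deriv, (hderiv hv).deriv]
    gcongr ?_ / 2
    exact monotoneOn_sinh_div_self (sqrt_pos.2 hu) (sqrt_pos.2 hv) (sqrt_le_sqrt huv)

theorem Real.cosh_sqrt_le {r c s : ℝ} (hs : |s| ≤ 1) :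
    cosh √(r ^ 2 + c ^ 2 + 2 * s * (r * c)) ≤ cosh r * cosh c + s * (sinh r * sinh c) := by
  obtain ⟨hs₁, hs₂⟩ := abs_le.1 hs
  have hconv := convexOn_cosh_sqrt.2 (sq_nonneg (r - c)) (sq_nonneg (r + c))
    (by linarith : 0 ≤ (1 - s) / 2) (by linarith : 0 ≤ (1 + s) / 2) (by ring)
  simp only [smul_eq_mul, sqrt_sq_eq_abs, cosh_abs, cosh_sub, cosh_add] at hconv
  have hu : r ^ 2 + c ^ 2 + 2 * s * (r * c) =
      (1 - s) / 2 * (r - c) ^ 2 + (1 + s) / 2 * (r + c) ^ 2 := by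
    ring
  rw [hu]
  exact hconv.trans_eq (by ring)

theorem Real.exp_div_cosh_le (a b : ℝ) : exp b / cosh a ≤ 2 * exp (b - a) := by
  rw [div_le_iff₀ (cosh_pos a)]
  calc exp b = exp (b - a) * exp a := by rw [← exp_add, sub_add_cancel]
    _ ≤ exp (b - a) * (2 * cosh a) := by
      gcongr
      rw [cosh_eq]
      linarith [exp_pos (-a)]
    _ = 2 * exp (b - a) * cosh a := by ring

theorem Real.prod_cosh_le_exp_sum_sq {ι : Type*} (s : Finset ι) (a : ι → ℝ) :
    ∏ k ∈ s, cosh (a k) ≤ exp (∑ k ∈ s, a k ^ 2 / 2) := by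
  rw [exp_sum]
  exact prod_le_prod (fun k _ ↦ (cosh_pos _).le) fun k _ ↦ cosh_le_exp_half_sq (a k)

theorem cosh_norm_add_le {E : Type*} [NormedAddCommGroup E] [InnerProductSpace ℝ E] (x y : E)
    {c : ℝ} (hy : ‖y‖ ≤ c) :
    cosh ‖x + y‖ ≤ cosh ‖x‖ * cosh c + sinh ‖x‖ * sinh c / (‖x‖ * c) * inner ℝ x y := by
  have hinner : |inner ℝ x y| ≤ ‖x‖ * c :=
    (abs_real_inner_le_norm x y).trans (by gcongr)
  set s := inner ℝ x y / (‖x‖ * c)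
  have hs : |s| ≤ 1 := by
    rw [abs_div]
    exact div_le_one_of_le₀ (hinner.trans (le_abs_self _)) (abs_nonneg _)
  have hs_mul : s * (‖x‖ * c) = inner ℝ x y := by
    rcases eq_or_ne (‖x‖ * c) 0 with h | h
    · rw [h] at hinner ⊢
      simpa using (abs_nonpos_iff.1 hinner).symm
    · exact div_mul_cancel₀ _ h
  have hnorm : ‖x + y‖ ≤ √(‖x‖ ^ 2 + c ^ 2 + 2 * s * (‖x‖ * c)) := by
    refine le_sqrt_of_sq_le ?_
    rw [norm_add_sq_real, mul_assoc, hs_mul]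
    nlinarith [norm_nonneg y]
  calc cosh ‖x + y‖ ≤ cosh √(‖x‖ ^ 2 + c ^ 2 + 2 * s * (‖x‖ * c)) := by
        rw [cosh_le_cosh, abs_of_nonneg (norm_nonneg _), abs_of_nonneg (sqrt_nonneg _)]
        exact hnorm
    _ ≤ cosh ‖x‖ * cosh c + s * (sinh ‖x‖ * sinh c) := cosh_sqrt_le hs
    _ = cosh ‖x‖ * cosh c + sinh ‖x‖ * sinh c / (‖x‖ * c) * inner ℝ x y := by ring

section

variable {Ω E F : Type*} {m m0 : MeasurableSpace Ω} {μ : Measure Ω} [NormedAddCommGroup F]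
  [NormedAddCommGroup E] [InnerProductSpace ℝ E] [CompleteSpace E]

theorem integrable_cosh_mul_norm [IsFiniteMeasure μ] {X : Ω → F} (hX : AEStronglyMeasurable X μ)
    {B : ℝ} (hXB : ∀ᵐ ω ∂μ, ‖X ω‖ ≤ B) (t : ℝ) :
    Integrable (fun ω ↦ cosh (t * ‖X ω‖)) μ := by
  refine .of_bound (continuous_cosh.comp_aestronglyMeasurable (hX.norm.const_mul t))
    (cosh (t * B)) ?_
  filter_upwards [hXB] with ω hω
  rw [norm_eq_abs, abs_of_pos (cosh_pos _), cosh_le_cosh, abs_mul, abs_mul,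
    abs_of_nonneg (norm_nonneg _)]
  gcongr
  exact hω.trans (le_abs_self B)

theorem ae_norm_sum_le {ι : Type*} {ν : ι → Ω → F} {c : ι → ℝ}
    (hbdd : ∀ k, ∀ᵐ ω ∂μ, ‖ν k ω‖ ≤ c k) (s : Finset ι) :
    ∀ᵐ ω ∂μ, ‖∑ k ∈ s, ν k ω‖ ≤ ∑ k ∈ s, c k := by
  filter_upwards [(Filter.eventually_all_finset s).2 fun k _ ↦ hbdd k] with ω hω
  exact (norm_sum_le _ _).trans (sum_le_sum hω)

theorem measure_lt_le_integral_cosh_div [IsFiniteMeasure μ] {f : Ω → ℝ}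
    {t : ℝ} (hf : Integrable (fun ω ↦ cosh (t * f ω)) μ) (ht : 0 ≤ t) {a : ℝ} (ha : 0 ≤ a) :
    μ {ω | a < f ω} ≤ ENNReal.ofReal ((∫ ω, cosh (t * f ω) ∂μ) / cosh (t * a)) := by
  have hmarkov := mul_meas_ge_le_integral_of_nonneg (ae_of_all _ fun ω ↦ (cosh_pos _).le) hf
    (cosh (t * a))
  calc μ {ω | a < f ω} ≤ μ {ω | cosh (t * a) ≤ cosh (t * f ω)} := by
        refine measure_mono fun ω (hω : a < f ω) ↦ ?_
        have hfω : 0 ≤ f ω := ha.trans hω.le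
        rw [Set.mem_ofPred_eq, cosh_le_cosh, abs_of_nonneg (by positivity),
          abs_of_nonneg (by positivity)]
        gcongr
    _ = ENNReal.ofReal (μ.real {ω | cosh (t * a) ≤ cosh (t * f ω)}) := by
      rw [ofReal_measureReal]
    _ ≤ _ := ENNReal.ofReal_le_ofReal ((le_div_iff₀' (cosh_pos _)).2 hmarkov)

theorem integral_inner_eq_zero_of_condExp_eq_zero [IsFiniteMeasure μ] (hm : m ≤ m0) {Z Y : Ω → E}
    (hZ : StronglyMeasurable[m] Z) {C : ℝ} (hZC : ∀ᵐ ω ∂μ, ‖Z ω‖ ≤ C) (hY : Integrable Y μ)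
    (hY0 : μ[Y|m] =ᵐ[μ] 0) :
    ∫ ω, inner ℝ (Z ω) (Y ω) ∂μ = 0 := calc
  ∫ ω, inner ℝ (Z ω) (Y ω) ∂μ = ∫ ω, (μ[fun ω ↦ innerSL ℝ (Z ω) (Y ω)|m]) ω ∂μ :=
    (integral_condExp hm).symm
  _ = ∫ ω, innerSL ℝ (Z ω) ((μ[Y|m]) ω) ∂μ :=
    integral_congr_ae (condExp_stronglyMeasurable_bilin_of_bound _ hm hZ hY C hZC)
  _ = 0 := by
    rw [integral_congr_ae (hY0.mono fun ω hω ↦ by simp [hω] : _ =ᵐ[μ] fun _ ↦ (0 : ℝ))]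
    simp

theorem integral_cosh_norm_add_le [IsFiniteMeasure μ] (hm : m ≤ m0) {X Y : Ω → E} {B c : ℝ}
    (hX : StronglyMeasurable[m] X) (hXB : ∀ᵐ ω ∂μ, ‖X ω‖ ≤ B) (hY : AEStronglyMeasurable Y μ)
    (hYc : ∀ᵐ ω ∂μ, ‖Y ω‖ ≤ c) (hY0 : μ[Y|m] =ᵐ[μ] 0) :
    ∫ ω, cosh ‖X ω + Y ω‖ ∂μ ≤ cosh c * ∫ ω, cosh ‖X ω‖ ∂μ := by
  set Z : Ω → E := fun ω ↦ (sinh ‖X ω‖ * sinh c / (‖X ω‖ * c)) • X ω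
  have hZ : StronglyMeasurable[m] Z := by
    refine (Measurable.stronglyMeasurable ?_).smul hX
    have := hX.norm.measurable
    fun_prop
  have hZB : ∀ᵐ ω ∂μ, ‖Z ω‖ ≤ sinh B * |sinh c / c| := by
    filter_upwards [hXB] with ω hω
    rw [norm_smul, norm_eq_abs]
    rcases (norm_nonneg (X ω)).eq_or_lt with h | h
    · rw [← h, mul_zero]
      exact mul_nonneg (sinh_nonneg_iff.2 ((norm_nonneg _).trans hω)) (abs_nonneg _)
    · have hsinh : |sinh ‖X ω‖| ≤ sinh B := by
        rw [abs_of_nonneg (sinh_nonneg_iff.2 h.le)]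
        exact sinh_le_sinh.2 hω
      calc |sinh ‖X ω‖ * sinh c / (‖X ω‖ * c)| * ‖X ω‖ = |sinh ‖X ω‖| * |sinh c / c| := by
            rw [mul_div_mul_comm, abs_mul, abs_div, abs_of_pos h]
            field_simp
        _ ≤ sinh B * |sinh c / c| := by gcongr
  have hYint : Integrable Y μ := .of_bound hY c hYc
  have hcosh : Integrable (fun ω ↦ cosh ‖X ω‖) μ := by
    simpa using integrable_cosh_mul_norm (hX.mono hm).aestronglyMeasurable hXB 1
  have hinner : Integrable (fun ω ↦ inner ℝ (Z ω) (Y ω)) μ :=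
    (innerSL ℝ).integrable_of_bilin_of_bdd_left _ (hZ.mono hm).aestronglyMeasurable hZB hYint
  have hpointwise : ∀ᵐ ω ∂μ, cosh ‖X ω + Y ω‖ ≤ cosh ‖X ω‖ * cosh c + inner ℝ (Z ω) (Y ω) := by
    filter_upwards [hYc] with ω hω
    rw [real_inner_smul_left]
    exact cosh_norm_add_le _ _ hω
  calc ∫ ω, cosh ‖X ω + Y ω‖ ∂μ ≤ ∫ ω, (cosh ‖X ω‖ * cosh c + inner ℝ (Z ω) (Y ω)) ∂μ :=
        integral_mono_of_nonneg (ae_of_all _ fun ω ↦ (cosh_pos _).le)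
          ((hcosh.mul_const _).add hinner) hpointwise
    _ = cosh c * ∫ ω, cosh ‖X ω‖ ∂μ := by
      rw [integral_add (hcosh.mul_const _) hinner, integral_mul_const,
        integral_inner_eq_zero_of_condExp_eq_zero hm hZ hZB hYint hY0, add_zero, mul_comm]

theorem integral_cosh_mul_norm_sum_le [IsProbabilityMeasure μ] (ℱ : Filtration ℕ m0)
    {ν : ℕ → Ω → E} {c : ℕ → ℝ} (hmeas : ∀ k, StronglyMeasurable[ℱ (k + 1)] (ν k))
    (hmdiff : ∀ k, μ[ν k|ℱ k] =ᵐ[μ] 0) (hbdd : ∀ k, ∀ᵐ ω ∂μ, ‖ν k ω‖ ≤ c k) {t : ℝ} (ht : 0 ≤ t)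
    (n : ℕ) :
    ∫ ω, cosh (t * ‖∑ k ∈ range n, ν k ω‖) ∂μ ≤ ∏ k ∈ range n, cosh (t * c k) := by
  induction n with
  | zero => simp
  | succ n ih =>
    have hS : StronglyMeasurable[ℱ n] (fun ω ↦ t • ∑ k ∈ range n, ν k ω) :=
      (Finset.stronglyMeasurable_fun_sum _
        fun k hk ↦ (hmeas k).mono (ℱ.mono (mem_range.1 hk))).const_smul t
    have hSB : ∀ᵐ ω ∂μ, ‖t • ∑ k ∈ range n, ν k ω‖ ≤ t * ∑ k ∈ range n, c k := by
      filter_upwards [ae_norm_sum_le hbdd (range n)] with ω hω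
      rw [norm_smul, norm_of_nonneg ht]
      gcongr
    have hνB : ∀ᵐ ω ∂μ, ‖t • ν n ω‖ ≤ t * c n := by
      filter_upwards [hbdd n] with ω hω
      rw [norm_smul, norm_of_nonneg ht]
      gcongr
    have hν0 : μ[t • ν n|ℱ n] =ᵐ[μ] 0 := by
      filter_upwards [condExp_smul (μ := μ) t (ν n) (ℱ n), hmdiff n] with ω h1 h2
      simp [h1, h2]
    have hstep := integral_cosh_norm_add_le (ℱ.le n) hS hSB
      (((hmeas n).mono (ℱ.le _)).aestronglyMeasurable.const_smul t) hνB hν0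
    simp only [Pi.smul_apply, ← smul_add, norm_smul, norm_of_nonneg ht] at hstep
    simp only [sum_range_succ, prod_range_succ]
    exact (hstep.trans (mul_le_mul_of_nonneg_left ih (cosh_pos _).le)).trans_eq (mul_comm _ _)

end

theorem pinelis_vector_azuma_general (d K : ℕ)
    {Ω : Type*} {m0 : MeasurableSpace Ω} (μ : Measure Ω) [IsProbabilityMeasure μ]
    (ℱ : Filtration ℕ m0)
    (ν : ℕ → Ω → EuclideanSpace ℝ (Fin d)) (c : ℕ → ℝ)
    (hmeas : ∀ k, StronglyMeasurable[ℱ (k + 1)] (ν k))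
    (hmdiff : ∀ k, μ[ν k|ℱ k] =ᵐ[μ] 0)
    (hbdd : ∀ k, ∀ᵐ ω ∂μ, ‖ν k ω‖ ≤ c k) :
    ∀ lam : ℝ, 0 < lam →
      μ {ω | lam < ‖∑ k ∈ Finset.range K, ν k ω‖} ≤
        ENNReal.ofReal (2 * Real.exp (-lam ^ 2 / (2 * ∑ k ∈ Finset.range K, c k ^ 2))) := by
  intro lam hlam
  obtain hσ | hσ := (sum_nonneg fun k _ ↦ sq_nonneg (c k) : 0 ≤ ∑ k ∈ range K, c k ^ 2).eq_or_lt
  · -- `-lam ^ 2 / 0 = 0`, so the bound is `2`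
    rw [← hσ, mul_zero, div_zero, exp_zero]
    exact prob_le_one.trans (by norm_num)
  set σ2 := ∑ k ∈ range K, c k ^ 2
  set t := lam / σ2 with ht_def
  have ht : 0 ≤ t := by positivity
  have hS : AEStronglyMeasurable (fun ω ↦ ∑ k ∈ range K, ν k ω) μ :=
    Finset.aestronglyMeasurable_fun_sum _ fun k _ ↦
      ((hmeas k).mono (ℱ.le _)).aestronglyMeasurable
  calc μ {ω | lam < ‖∑ k ∈ range K, ν k ω‖}
      ≤ ENNReal.ofReal ((∫ ω, cosh (t * ‖∑ k ∈ range K, ν k ω‖) ∂μ) / cosh (t * lam)) :=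
        measure_lt_le_integral_cosh_div
          (integrable_cosh_mul_norm hS (ae_norm_sum_le hbdd _) t) ht hlam.le
    _ ≤ ENNReal.ofReal (exp (∑ k ∈ range K, (t * c k) ^ 2 / 2) / cosh (t * lam)) := by
        gcongr
        exact (integral_cosh_mul_norm_sum_le ℱ hmeas hmdiff hbdd ht K).trans
          (prod_cosh_le_exp_sum_sq _ _)
    _ ≤ ENNReal.ofReal (2 * exp (∑ k ∈ range K, (t * c k) ^ 2 / 2 - t * lam)) := by
        gcongr
        exact exp_div_cosh_le _ _
    _ = ENNReal.ofReal (2 * exp (-lam ^ 2 / (2 * σ2))) := by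
        have hsum : ∑ k ∈ range K, (t * c k) ^ 2 / 2 = t ^ 2 * σ2 / 2 := by
          simp only [σ2, mul_pow, ← sum_div, ← mul_sum]
        rw [hsum, ht_def]
        congr 3
        field_simp
        ring

/-- Vector-valued Azuma inequality (Pinelis). For an `ℝ^d`-valued martingale
difference sequence `ν₁, …, ν_K` adapted to a filtration, with conditional mean zero and
almost-sure norm bounds `‖ν_k‖ ≤ c_k`, for every `λ > 0`,
`P(‖Σ_k ν_k‖ > λ) ≤ 2 exp(−λ² / (2 Σ_k c_k²))`. -/
theorem pinelis_vector_azuma (d K : ℕ)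
    {Ω : Type*} {m0 : MeasurableSpace Ω} (μ : Measure Ω) [IsProbabilityMeasure μ]
    (ℱ : Filtration ℕ m0)
    (ν : ℕ → Ω → EuclideanSpace ℝ (Fin d)) (c : ℕ → ℝ)
    (hc : ∀ k, 0 < c k)
    (hmeas : ∀ k, StronglyMeasurable[ℱ (k + 1)] (ν k))
    (hmdiff : ∀ k, μ[ν k|ℱ k] =ᵐ[μ] 0)
    (hbdd : ∀ k, ∀ᵐ ω ∂μ, ‖ν k ω‖ ≤ c k) :
    ∀ lam : ℝ, 0 < lam →
      μ {ω | lam < ‖∑ k ∈ Finset.range K, ν k ω‖} ≤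
        ENNReal.ofReal (2 * Real.exp (-lam ^ 2 / (2 * ∑ k ∈ Finset.range K, c k ^ 2))) :=
  pinelis_vector_azuma_general d K μ ℱ ν c hmeas hmdiff hbdd
end
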